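/- arXiv:2501.13854 — 2 statements merged into one kernel-verified Lean document; each statement's English description precedes it below -/
import Mathlib

section
/- If A is a zero-stable square real matrix, then there exists M > 0 such that the operator norm of exp(tA) is bounded by M for all t ≥ 0. -/
open scoped Matrix
attribute [local instance] Matrix.linftyOpNormedRing Matrix.linftyOpNormedAlgebra

/-- The index of stability: the maximum of the real parts of the (complex) eigenvalues of `A`. -/
noncomputable def specAbscissa {n : ℕ} (A : Matrix (Fin n) (Fin n) ℝ) : ℝ :=
  sSup (Complex.re '' spectrum ℂ (A.map Complex.ofReal))

/-- A real square matrix is zero-stable if its index of stability is `0`, `0` is the only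
eigenvalue with real part `0`, and `0` is a simple eigenvalue (algebraic multiplicity one). -/
def ZeroStable {n : ℕ} (A : Matrix (Fin n) (Fin n) ℝ) : Prop :=
  specAbscissa A = 0 ∧
  (∀ ξ ∈ spectrum ℂ (A.map Complex.ofReal), ξ.re = 0 → ξ = 0) ∧
  (Matrix.charpoly (A.map Complex.ofReal)).rootMultiplicity 0 = 1

/-! Over `ℂ` the characteristic polynomial of `A` is `X * q` with `q = ∏ (X - ζ)`, `Re ζ < 0`.
By Cayley–Hamilton `q(A) A = 0`, so `q(A) e^{tA} = q(A)` stays bounded. The factors of `q` are then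
removed one at a time: if `y (A - ζ) e^{tA}` is bounded for `t ≥ 0`, then `g t = y e^{tA}` solves
`g' = ζ g + (bounded)`, and since `Re ζ < 0` variation of constants keeps `g` bounded. -/

open Polynomial

def IsBoundedOnNonneg {E : Type*} [Norm E] (f : ℝ → E) : Prop :=
  ∃ K, ∀ t, 0 ≤ t → ‖f t‖ ≤ K

section VariationOfConstants

variable {E : Type*} [NormedAddCommGroup E] [NormedSpace ℂ E] {g h : ℝ → E} {ξ : ℂ}

theorem hasDerivAt_cexp_neg_mul_smul {t : ℝ} (hg : HasDerivAt g (ξ • g t + h t) t) :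
    HasDerivAt (fun s : ℝ => Complex.exp (-(ξ * s)) • g s) (Complex.exp (-(ξ * t)) • h t) t := by
  have hexp :
      HasDerivAt (fun s : ℝ => Complex.exp (-(ξ * s))) (Complex.exp (-(ξ * t)) * -ξ) t := by
    simpa using (((hasDerivAt_id (t : ℂ)).const_mul ξ).neg.cexp).comp_ofReal
  convert hexp.fun_smul hg using 1
  rw [smul_add, smul_smul, add_right_comm, ← add_smul, mul_neg, add_neg_cancel, zero_smul,
    zero_add]

theorem norm_le_of_hasDerivAt_eq_smul_add (hξ : ξ.re < 0) {K : ℝ}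
    (hg : ∀ t, HasDerivAt g (ξ • g t + h t) t) (hK : ∀ t, 0 ≤ t → ‖h t‖ ≤ K) {t : ℝ} (ht : 0 ≤ t) :
    ‖g t‖ ≤ ‖g 0‖ + K / -ξ.re := by
  set a := -ξ.re
  have ha : 0 < a := neg_pos.mpr hξ
  have hK0 : 0 ≤ K := (norm_nonneg _).trans (hK 0 le_rfl)
  -- `u s = e^{-ξ s} • g s` has `‖u' s‖ ≤ K e^{a s}`, which the derivative `a C e^{a s}` of
  -- the barrier `C e^{a s}` dominates; undoing the factor `e^{a t}` leaves `‖g t‖ ≤ C`.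
  set C := ‖g 0‖ + K / a
  have hnorm_exp : ∀ s : ℝ, ‖Complex.exp (-(ξ * s))‖ = Real.exp (a * s) := by
    intro s
    simp [Complex.norm_exp, a]
  have hu := fun s => hasDerivAt_cexp_neg_mul_smul (hg s)
  have hC : ∀ s : ℝ, HasDerivAt (fun s => C * Real.exp (a * s)) (a * C * Real.exp (a * s)) s :=
    fun s => by
      simpa [mul_comm, mul_left_comm, mul_assoc] using
        ((hasDerivAt_mul_const a : HasDerivAt (· * a) a s).exp).const_mul C
  have hfence := image_norm_le_of_norm_deriv_right_le_deriv_boundary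
    (fun s _ => (hu s).continuousAt.continuousWithinAt) (fun s _ => (hu s).hasDerivWithinAt)
    (by simp [C]; positivity) hC (a := 0) (b := t) ?_ (Set.right_mem_Icc.mpr ht)
  · rw [norm_smul, hnorm_exp, mul_comm] at hfence
    exact le_of_mul_le_mul_right hfence (Real.exp_pos _)
  · intro s hs
    have haC : K ≤ a * C := by
      simp only [C, mul_add, mul_div_cancel₀ K ha.ne']
      exact le_add_of_nonneg_left (mul_nonneg ha.le (norm_nonneg _))
    rw [norm_smul, hnorm_exp, mul_comm]
    exact mul_le_mul_of_nonneg_right ((hK s hs.1).trans haC) (Real.exp_pos _).le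

end VariationOfConstants

section BanachAlgebra

variable {𝔸 : Type*} [NormedRing 𝔸] [NormedAlgebra ℂ 𝔸] [CompleteSpace 𝔸] (B : 𝔸)

theorem hasDerivAt_exp_ofReal_smul (t : ℝ) :
    HasDerivAt (fun s : ℝ => NormedSpace.exp ((s : ℂ) • B))
      (B * NormedSpace.exp ((t : ℂ) • B)) t := by
  simpa [Function.comp_def] using
    (hasDerivAt_exp_smul_const' B (t : ℂ)).scomp t Complex.ofRealCLM.hasDerivAt

theorem mul_exp_ofReal_smul_of_mul_eq_zero {y : 𝔸} (hy : y * B = 0) (t : ℝ) :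
    y * NormedSpace.exp ((t : ℂ) • B) = y := by
  have hderiv : ∀ s : ℝ, HasDerivAt (fun s : ℝ => y * NormedSpace.exp ((s : ℂ) • B)) 0 s := by
    intro s
    simpa [← mul_assoc, hy] using (hasDerivAt_exp_ofReal_smul B s).const_mul y
  simpa using is_const_of_deriv_eq_zero (fun s => (hderiv s).differentiableAt)
    (fun s => (hderiv s).deriv) t 0

theorem IsBoundedOnNonneg.of_mul_sub_algebraMap_mul_exp {ξ : ℂ} (hξ : ξ.re < 0) {y : 𝔸}
    (h : IsBoundedOnNonneg fun t : ℝ =>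
      y * (B - algebraMap ℂ 𝔸 ξ) * NormedSpace.exp ((t : ℂ) • B)) :
    IsBoundedOnNonneg fun t : ℝ => y * NormedSpace.exp ((t : ℂ) • B) := by
  obtain ⟨K, hK⟩ := h
  refine ⟨‖y‖ + K / -ξ.re, fun t ht => ?_⟩
  have hderiv : ∀ s : ℝ, HasDerivAt (fun s : ℝ => y * NormedSpace.exp ((s : ℂ) • B))
      (ξ • (y * NormedSpace.exp ((s : ℂ) • B)) +
        y * (B - algebraMap ℂ 𝔸 ξ) * NormedSpace.exp ((s : ℂ) • B)) s := by
    intro s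
    convert (hasDerivAt_exp_ofReal_smul B s).const_mul y using 1
    simp only [Algebra.algebraMap_eq_smul_one, mul_sub, sub_mul, mul_smul_comm, smul_mul_assoc,
      mul_one, mul_assoc]
    abel
  simpa using norm_le_of_hasDerivAt_eq_smul_add hξ hderiv hK ht

theorem IsBoundedOnNonneg.of_mul_aeval_prod_mul_exp {s : Multiset ℂ} (hs : ∀ ξ ∈ s, ξ.re < 0)
    {y : 𝔸} (h : IsBoundedOnNonneg fun t : ℝ =>
      y * aeval B (s.map fun ζ => X - C ζ).prod * NormedSpace.exp ((t : ℂ) • B)) :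
    IsBoundedOnNonneg fun t : ℝ => y * NormedSpace.exp ((t : ℂ) • B) := by
  induction s using Multiset.induction_on generalizing y with
  | empty => simpa using h
  | cons ξ s ih =>
    refine .of_mul_sub_algebraMap_mul_exp B (hs ξ (Multiset.mem_cons_self ξ s))
      (ih (fun ζ hζ => hs ζ (Multiset.mem_cons_of_mem hζ)) ?_)
    simpa [mul_assoc] using h

theorem isBoundedOnNonneg_exp_of_aeval_X_mul_prod_eq_zero {s : Multiset ℂ}
    (hs : ∀ ξ ∈ s, ξ.re < 0) (h : aeval B (X * (s.map fun ζ => X - C ζ).prod) = 0) :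
    IsBoundedOnNonneg fun t : ℝ => NormedSpace.exp ((t : ℂ) • B) := by
  set y := aeval B (s.map fun ζ => X - C ζ).prod
  have hy : y * B = 0 := by rwa [mul_comm, map_mul, aeval_X] at h
  have := IsBoundedOnNonneg.of_mul_aeval_prod_mul_exp B hs (y := 1)
    ⟨‖y‖, fun t _ => by
      show ‖1 * y * _‖ ≤ ‖y‖
      rw [one_mul, mul_exp_ofReal_smul_of_mul_eq_zero B hy]⟩
  simpa using this

end BanachAlgebra

namespace Matrix

variable {m : Type*} [Fintype m] [DecidableEq m]

theorem linfty_opNorm_map_ofReal (A : Matrix m m ℝ) : ‖A.map Complex.ofReal‖ = ‖A‖ := by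
  simp [linfty_opNorm_def]

theorem map_ofReal_exp (A : Matrix m m ℝ) :
    (NormedSpace.exp A).map Complex.ofReal = NormedSpace.exp (A.map Complex.ofReal) :=
  NormedSpace.map_exp (Complex.ofRealHom.mapMatrix : Matrix m m ℝ →+* Matrix m m ℂ)
    (continuous_id.matrix_map Complex.continuous_ofReal) A

end Matrix

namespace ZeroStable

variable {n : ℕ} {A : Matrix (Fin n) (Fin n) ℝ}

theorem re_neg_of_mem_spectrum (hA : ZeroStable A) {ξ : ℂ}
    (hξ : ξ ∈ spectrum ℂ (A.map Complex.ofReal)) (hξ0 : ξ ≠ 0) : ξ.re < 0 := by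
  obtain ⟨habs, himag, -⟩ := hA
  have hle : ξ.re ≤ 0 :=
    habs ▸ le_csSup ((Matrix.finite_spectrum _).image _).bddAbove ⟨ξ, hξ, rfl⟩
  exact hle.lt_of_ne fun h => hξ0 (himag ξ hξ h)

theorem charpoly_eq_X_mul_prod (hA : ZeroStable A) :
    ∃ s : Multiset ℂ, (∀ ξ ∈ s, ξ.re < 0) ∧
      (A.map Complex.ofReal).charpoly = X * (s.map fun ζ => X - C ζ).prod := by
  set p := (A.map Complex.ofReal).charpoly
  have hcount : p.roots.count 0 = 1 := by rw [count_roots, hA.2.2]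
  refine ⟨p.roots.erase 0, fun ξ hξ => hA.re_neg_of_mem_spectrum ?_ ?_, ?_⟩
  · exact Matrix.mem_spectrum_iff_isRoot_charpoly.mpr
      (isRoot_of_mem_roots (Multiset.mem_of_mem_erase hξ))
  · rintro rfl
    rw [← Multiset.count_pos, Multiset.count_erase_self, hcount] at hξ
    exact lt_irrefl 0 hξ
  · have h0 : (0 : ℂ) ∈ p.roots := Multiset.count_pos.mp (by omega)
    conv_lhs => rw [(IsAlgClosed.splits p).eq_prod_roots_of_monic (Matrix.charpoly_monic _),
      ← Multiset.cons_erase h0]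
    simp

end ZeroStable

theorem stmt_1 {n : ℕ} (A : Matrix (Fin n) (Fin n) ℝ) (hA : ZeroStable A) :
    ∃ M > (0 : ℝ), ∀ t : ℝ, 0 ≤ t → ‖NormedSpace.exp (t • A)‖ ≤ M := by
  obtain ⟨s, hs, hcharpoly⟩ := hA.charpoly_eq_X_mul_prod
  obtain ⟨K, hK⟩ := isBoundedOnNonneg_exp_of_aeval_X_mul_prod_eq_zero (A.map Complex.ofReal) hs
    (hcharpoly ▸ Matrix.aeval_self_charpoly _)
  refine ⟨max K 1, by positivity, fun t ht => ?_⟩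
  have hmap : (t • A).map Complex.ofReal = (t : ℂ) • A.map Complex.ofReal := by
    ext
    simp
  calc ‖NormedSpace.exp (t • A)‖ = ‖NormedSpace.exp ((t : ℂ) • A.map Complex.ofReal)‖ := by
        rw [← hmap, ← Matrix.map_ofReal_exp, Matrix.linfty_opNorm_map_ofReal]
    _ ≤ max K 1 := (hK t ht).trans (le_max_left _ _)
end

section
/- Let A ∈ ℝ^{N×N} be zero-stable with Jordan decomposition A = Q J Q^{−1} where the eigenvalue 0 is simple and all other eigenvalues have strictly negative real part. Then lim_{t→∞} e^{tA} = w v^⊤, where w is a right eigenvector and v a left eigenvector of A for the eigenvalue 0, normalized so that v^⊤ w = 1. -/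
open scoped Matrix
attribute [local instance] Matrix.linftyOpNormedRing Matrix.linftyOpNormedAlgebra

/-!
Zero is a simple root of the characteristic polynomial, so `χ_A = X * g` with `X` and `g` coprime,
and a Bézout identity `u * X + v * g = 1` gives the spectral projection `P = v(A) g(A)`: it is
idempotent, `A P = P A = 0` and `u(A) A + P = 1`. Its columns lie in `ker A`, which is at most
one-dimensional, so `P = w vᵀ`, and `P² = P ≠ 0` forces `vᵀ w = 1`.

Writing `e^{tA} = e^{t(A - P)} (1 - P) + P`, it remains to show `e^{t(A - P)} → 0`. Every
eigenvalue of `A - P` has negative real part (it is `-1` on the range of `P` and a nonzero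
eigenvalue of `A` otherwise), hence `e^{A - P}` has spectral radius `< 1`, its powers tend to `0`
by Gelfand's formula, and `e^{t(A - P)} = (e^{A - P})^⌊t⌋ e^{(t - ⌊t⌋)(A - P)}`.
-/

open Filter Topology NormedSpace Polynomial

lemma tendsto_pow_nhds_zero_of_spectralRadius_lt_one {A : Type*} [NormedRing A]
    [NormedAlgebra ℂ A] [CompleteSpace A] {a : A} (h : spectralRadius ℂ a < 1) :
    Tendsto (a ^ ·) atTop (𝓝 0) := by
  obtain ⟨r, hr, hr1⟩ := ENNReal.lt_iff_exists_nnreal_btwn.mp h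
  have hbound : ∀ᶠ k : ℕ in atTop, ‖a ^ k‖₊ ≤ r ^ k := by
    filter_upwards [(spectrum.pow_nnnorm_pow_one_div_tendsto_nhds_spectralRadius a)
      |>.eventually_lt_const hr, eventually_ne_atTop 0] with k hk hk0
    have := ENNReal.rpow_le_rpow hk.le (by positivity : (0 : ℝ) ≤ k)
    rw [← ENNReal.rpow_mul, one_div_mul_cancel (by exact_mod_cast hk0), ENNReal.rpow_one,
      ENNReal.rpow_natCast] at this
    exact_mod_cast this
  refine squeeze_zero_norm' (hbound.mono fun k hk => ?_)
    (tendsto_pow_atTop_nhds_zero_of_lt_one r.2 (by exact_mod_cast hr1))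
  exact_mod_cast hk

section BanachAlgebra

variable {𝔸 : Type*} [NormedRing 𝔸] [NormedAlgebra ℚ 𝔸] [CompleteSpace 𝔸]

lemma exp_mul_eq_of_mul_eq_zero {x y : 𝔸} (h : x * y = 0) : exp x * y = y := by
  rw [← (exp_series_hasSum_exp' (𝕂 := ℚ) x).tsum_eq,
    ← (expSeries_summable' (𝕂 := ℚ) x).tsum_mul_right, tsum_eq_single 0 fun k hk => ?_]
  · simp
  · obtain ⟨k, rfl⟩ := Nat.exists_eq_succ_of_ne_zero hk
    rw [smul_mul_assoc, pow_succ, mul_assoc, h, mul_zero, smul_zero]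

variable [NormedAlgebra ℝ 𝔸]

lemma exp_smul_eq_exp_smul_sub_mul_add {a p : 𝔸} (hap : a * p = 0) (hpa : p * a = 0)
    (hp : IsIdempotentElem p) (t : ℝ) : exp (t • a) = exp (t • (a - p)) * (1 - p) + p := by
  have hcomm : Commute a p := hap.trans hpa.symm
  have hfix : exp (-(t • p)) * (1 - p) = 1 - p := exp_mul_eq_of_mul_eq_zero <| by
    rw [neg_mul, smul_mul_assoc, mul_sub, mul_one, hp.eq, sub_self, smul_zero, neg_zero]
  rw [smul_sub, sub_eq_add_neg, exp_add_of_commute ((hcomm.smul_left t).smul_right t).neg_right,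
    mul_assoc, hfix, mul_sub, mul_one,
    exp_mul_eq_of_mul_eq_zero (by rw [smul_mul_assoc, hap, smul_zero]), sub_add_cancel]

lemma tendsto_exp_smul_nhds_zero_of_tendsto_pow {a : 𝔸}
    (h : Tendsto (exp a ^ ·) atTop (𝓝 0)) :
    Tendsto (fun t : ℝ => exp (t • a)) atTop (𝓝 0) := by
  obtain ⟨C, hC⟩ := (isCompact_Icc (a := (0 : ℝ)) (b := 1)).exists_bound_of_continuousOn
    (f := fun s : ℝ => exp (s • a)) (by fun_prop)
  have hsplit (t : ℝ) : exp (t • a) = exp a ^ ⌊t⌋₊ * exp ((t - ⌊t⌋₊) • a) := by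
    rw [← exp_nsmul, ← exp_add_of_commute (((Commute.refl a).smul_left _).smul_right _),
      ← Nat.cast_smul_eq_nsmul ℝ, ← add_smul, add_sub_cancel]
  refine squeeze_zero_norm' ?_
    ((h.norm.comp tendsto_nat_floor_atTop).mul_const C |>.trans (by rw [norm_zero, zero_mul]))
  filter_upwards [eventually_ge_atTop 0] with t ht
  rw [hsplit]
  refine (norm_mul_le _ _).trans (mul_le_mul_of_nonneg_left (hC _ ⟨?_, ?_⟩) (norm_nonneg _))
  · exact sub_nonneg.mpr (Nat.floor_le ht)
  · linarith [Nat.lt_floor_add_one t]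

end BanachAlgebra

lemma Module.End.exists_hasEigenvector_of_commute {K V : Type*} [Field K] [IsAlgClosed K]
    [AddCommGroup V] [Module K V] [FiniteDimensional K V] {f g : Module.End K V}
    (h : Commute f g) {μ : K} (hμ : f.HasEigenvalue μ) :
    ∃ ν v, f.HasEigenvector μ v ∧ g.HasEigenvector ν v := by
  have hmaps := Module.End.mapsTo_genEigenspace_of_comm h μ 1
  have : Nontrivial (f.genEigenspace μ 1) := Submodule.nontrivial_iff_ne_bot.mpr hμ
  obtain ⟨ν, hν⟩ := Module.End.exists_eigenvalue (g.restrict hmaps)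
  obtain ⟨⟨v, hv⟩, hvν⟩ := hν.exists_hasEigenvector
  have hv0 : v ≠ 0 := fun h0 => hvν.2 (by simp [h0])
  refine ⟨ν, v, ⟨hv, hv0⟩, ⟨Module.End.mem_eigenspace_iff.mpr ?_, hv0⟩⟩
  exact congrArg Subtype.val hvν.apply_eq_smul

lemma Polynomial.exists_eq_X_mul_isCoprime {K : Type*} [Field K] {p : K[X]} (hp : p ≠ 0)
    (h : p.rootMultiplicity 0 = 1) : ∃ g, p = X * g ∧ IsCoprime X g := by
  obtain ⟨g, hpg, hg⟩ := p.exists_eq_pow_rootMultiplicity_mul_and_not_dvd hp 0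
  rw [h, map_zero, sub_zero, pow_one] at hpg
  rw [map_zero, sub_zero] at hg
  exact ⟨g, hpg, irreducible_X.coprime_iff_not_dvd.mpr hg⟩

namespace Matrix

variable {ι : Type*} [Fintype ι] [DecidableEq ι]

section Field

variable {K : Type*} [Field K]

lemma mem_spectrum_iff_exists_mulVec_eq_smul {M : Matrix ι ι K} {μ : K} :
    μ ∈ spectrum K M ↔ ∃ x ≠ 0, M *ᵥ x = μ • x := by
  rw [← spectrum_toLin', ← Module.End.hasEigenvalue_iff_mem_spectrum,
    Module.End.hasEigenvalue_iff, Submodule.ne_bot_iff]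
  simp [and_comm]

lemma zero_mem_spectrum_of_rootMultiplicity_charpoly_eq_one {A : Matrix ι ι K}
    (h : A.charpoly.rootMultiplicity 0 = 1) : (0 : K) ∈ spectrum K A := by
  rw [mem_spectrum_iff_isRoot_charpoly, ← rootMultiplicity_pos A.charpoly_monic.ne_zero, h]
  exact one_pos

lemma exists_isIdempotentElem_of_rootMultiplicity_charpoly_eq_one {A : Matrix ι ι K}
    (h : A.charpoly.rootMultiplicity 0 = 1) :
    ∃ P Q : Matrix ι ι K, IsIdempotentElem P ∧ A * P = 0 ∧ P * A = 0 ∧ Q * A + P = 1 := by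
  obtain ⟨g, hg, u, v, huv⟩ := Polynomial.exists_eq_X_mul_isCoprime A.charpoly_monic.ne_zero h
  have hX : aeval A (X : K[X]) = A := aeval_X A
  have hAP : A * aeval A (v * g) = 0 :=
    calc A * aeval A (v * g) = aeval A (v * A.charpoly) := by
          rw [hg, mul_left_comm, map_mul (aeval A) X, hX]
      _ = 0 := by rw [map_mul, aeval_self_charpoly, mul_zero]
  have hQ : aeval A u * A + aeval A (v * g) = 1 := by
    simpa only [map_add, map_mul (aeval A) u X, hX, map_one] using congrArg (aeval A) huv
  have hcomm := (Commute.all (X : K[X]) (v * g)).map (aeval A)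
  rw [hX] at hcomm
  refine ⟨aeval A (v * g), aeval A u, ?_, hAP, by rw [← hcomm.eq, hAP], hQ⟩
  rw [IsIdempotentElem]
  conv_rhs => rw [← one_mul (aeval A (v * g)), ← hQ]
  rw [add_mul, mul_assoc, hAP, mul_zero, zero_add]

lemma ne_zero_of_mul_add_eq_one {A P Q : Matrix ι ι K} (hA : (0 : K) ∈ spectrum K A)
    (hQ : Q * A + P = 1) : P ≠ 0 := by
  rintro rfl
  rw [add_zero] at hQ
  exact spectrum.not_isUnit_of_zero_mem K hA
    ((isUnit_iff_isUnit_det A).mpr (isUnit_det_of_left_inverse hQ))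

lemma finrank_ker_toLin'_le_one_of_rootMultiplicity_charpoly_eq_one {A : Matrix ι ι K}
    (h : A.charpoly.rootMultiplicity 0 = 1) : Module.finrank K (LinearMap.ker A.toLin') ≤ 1 :=
  calc Module.finrank K (LinearMap.ker A.toLin')
      ≤ Module.finrank K (Module.End.maxGenEigenspace A.toLin' 0) := by
        rw [← Module.End.eigenspace_zero]
        exact Submodule.finrank_mono Module.End.eigenspace_le_maxGenEigenspace
    _ = 1 := by
        rw [LinearMap.finrank_maxGenEigenspace_zero_eq, charpoly_toLin',
          ← rootMultiplicity_eq_natTrailingDegree', h]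

omit [Fintype ι] [DecidableEq ι] in
lemma exists_eq_vecMulVec_of_mul_eq_zero {m : Type*} [Fintype m] [DecidableEq m]
    {A : Matrix m m K} {P : Matrix m ι K} (hA : Module.finrank K (LinearMap.ker A.toLin') ≤ 1)
    (hAP : A * P = 0) : ∃ w v, P = vecMulVec w v := by
  obtain ⟨w, hw⟩ := finrank_le_one_iff.mp hA
  have hcol : ∀ j, (fun i => P i j) ∈ LinearMap.ker A.toLin' := fun j => by
    ext i
    exact congrFun (congrFun hAP i) j
  choose c hc using fun j => hw ⟨_, hcol j⟩
  refine ⟨w, c, ext fun i j => ?_⟩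
  rw [vecMulVec_apply, mul_comm]
  exact (congrFun (congrArg Subtype.val (hc j)) i).symm

omit [DecidableEq ι] in
lemma dotProduct_eq_one_of_isIdempotentElem_vecMulVec {w v : ι → K}
    (hP : IsIdempotentElem (vecMulVec w v)) (h0 : vecMulVec w v ≠ 0) : v ⬝ᵥ w = 1 := by
  have h : (v ⬝ᵥ w - 1) • vecMulVec w v = 0 := by
    rw [sub_smul, one_smul, ← vecMulVec_smul, ← vecMulVec_mul_vecMulVec, hP.eq, sub_self]
  exact sub_eq_zero.mp ((smul_eq_zero.mp h).resolve_right h0)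

end Field

section Complex

lemma exp_mulVec_of_mulVec_eq_smul {C : Matrix ι ι ℂ} {x : ι → ℂ} {μ : ℂ}
    (h : C *ᵥ x = μ • x) : exp C *ᵥ x = Complex.exp μ • x := by
  have hpow : ∀ k : ℕ, (C ^ k) *ᵥ x = μ ^ k • x := by
    intro k
    induction k with
    | zero => simp
    | succ k ih => rw [pow_succ', ← mulVec_mulVec, ih, mulVec_smul, h, smul_smul, pow_succ]
  have hC := (exp_series_hasSum_exp' (𝕂 := ℂ) C).map (mulVec.addMonoidHomLeft x)
    (continuous_id.matrix_mulVec continuous_const)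
  have hμ := (exp_series_hasSum_exp' (𝕂 := ℂ) μ).smul_const x
  rw [← Complex.exp_eq_exp_ℂ] at hμ
  refine hC.unique (hμ.congr_fun fun k => ?_)
  simp [mulVec.addMonoidHomLeft, smul_mulVec, hpow, smul_smul]

lemma spectrum_exp_subset (C : Matrix ι ι ℂ) :
    spectrum ℂ (exp C) ⊆ Complex.exp '' spectrum ℂ C := by
  intro μ hμ
  rw [← spectrum_toLin', ← Module.End.hasEigenvalue_iff_mem_spectrum] at hμ
  have hcomm : Commute (toLin' (exp C)) (toLin' C) :=
    (Commute.refl C).exp_left.map toLinAlgEquiv'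
  obtain ⟨ν, y, hyμ, hyν⟩ := Module.End.exists_hasEigenvector_of_commute hcomm hμ
  refine ⟨ν, ?_, smul_left_injective ℂ hyμ.2 ?_⟩
  · rw [← spectrum_toLin']
    exact (Module.End.hasEigenvalue_of_hasEigenvector hyν).mem_spectrum
  · have := hyμ.apply_eq_smul
    rwa [toLin'_apply, exp_mulVec_of_mulVec_eq_smul hyν.apply_eq_smul] at this

lemma tendsto_exp_pow_nhds_zero {C : Matrix ι ι ℂ} (h : ∀ μ ∈ spectrum ℂ C, μ.re < 0) :
    Tendsto (exp C ^ ·) atTop (𝓝 0) := by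
  refine tendsto_pow_nhds_zero_of_spectralRadius_lt_one ?_
  rcases (spectrum ℂ (exp C)).eq_empty_or_nonempty with hempty | hne
  · simp [spectralRadius, hempty]
  refine ENNReal.coe_one ▸ spectrum.spectralRadius_lt_of_forall_lt_of_nonempty hne fun z hz => ?_
  obtain ⟨ν, hν, rfl⟩ := C.spectrum_exp_subset hz
  rw [← NNReal.coe_lt_coe, coe_nnnorm, Complex.norm_exp, NNReal.coe_one, Real.exp_lt_one_iff]
  exact h ν hν

lemma re_neg_of_mem_spectrum_sub {A P Q : Matrix ι ι ℂ} (hP : IsIdempotentElem P)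
    (hPA : P * A = 0) (hQ : Q * A + P = 1)
    (hA : ∀ μ ∈ spectrum ℂ A, μ ≠ 0 → μ.re < 0) :
    ∀ μ ∈ spectrum ℂ (A - P), μ.re < 0 := by
  intro μ hμ
  obtain ⟨y, hy0, hy⟩ := mem_spectrum_iff_exists_mulVec_eq_smul.mp hμ
  have hPy : (μ + 1) • (P *ᵥ y) = 0 := by
    rw [add_smul, one_smul, ← mulVec_smul, ← hy, mulVec_mulVec, Matrix.mul_sub, hPA, hP.eq,
      zero_sub, neg_mulVec, neg_add_cancel]
  rcases smul_eq_zero.mp hPy with hμ1 | hPy0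
  · rw [eq_neg_of_add_eq_zero_left hμ1]
    norm_num
  have hAy : A *ᵥ y = μ • y := by rw [← hy, sub_mulVec, hPy0, sub_zero]
  refine hA μ (mem_spectrum_iff_exists_mulVec_eq_smul.mpr ⟨y, hy0, hAy⟩) ?_
  rintro rfl
  apply hy0
  rw [← one_mulVec y, ← hQ, add_mulVec, ← mulVec_mulVec, hAy, hPy0, zero_smul, mulVec_zero,
    add_zero]

end Complex

lemma tendsto_exp_smul_nhds_zero {B : Matrix ι ι ℝ}
    (h : ∀ μ ∈ spectrum ℂ (B.map Complex.ofReal), μ.re < 0) :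
    Tendsto (fun t : ℝ => exp (t • B)) atTop (𝓝 0) := by
  refine tendsto_exp_smul_nhds_zero_of_tendsto_pow ?_
  have hmap : ∀ k : ℕ, (exp B ^ k).map Complex.ofReal = exp (B.map Complex.ofReal) ^ k :=
    fun k => (map_pow Complex.ofRealHom.mapMatrix _ k).trans <| congrArg (· ^ k) <|
      map_exp Complex.ofRealHom.mapMatrix (continuous_id.matrix_map Complex.continuous_ofReal) B
  have hre := ((continuous_id.matrix_map Complex.continuous_re).tendsto 0).comp
    (tendsto_exp_pow_nhds_zero h)
  simp only [Function.comp_def, ← hmap] at hre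
  exact hre

end Matrix

namespace ZeroStable

variable {n : ℕ} {A : Matrix (Fin n) (Fin n) ℝ}

lemma re_neg_of_mem_spectrum_s13 (hA : ZeroStable A) :
    ∀ μ ∈ spectrum ℂ (A.map Complex.ofReal), μ ≠ 0 → μ.re < 0 := by
  intro μ hμ hμ0
  have hle : μ.re ≤ 0 := hA.1 ▸ le_csSup
    ((Matrix.finite_spectrum _).image Complex.re).bddAbove ⟨μ, hμ, rfl⟩
  exact hle.lt_of_ne fun h => hμ0 (hA.2.1 μ hμ h)

lemma rootMultiplicity_charpoly (hA : ZeroStable A) : A.charpoly.rootMultiplicity 0 = 1 := by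
  rw [eq_rootMultiplicity_map Complex.ofRealHom.injective, ← Matrix.charpoly_map]
  exact hA.2.2

end ZeroStable

/-- if `A` is zero-stable then `e^{tA} → w vᵀ` as `t → ∞`, where `w` is a right
eigenvector and `v` a left eigenvector of `A` for the eigenvalue `0`, with `vᵀw = 1`. -/
theorem stmt_13 {n : ℕ} (A : Matrix (Fin n) (Fin n) ℝ) (hA : ZeroStable A) :
    ∃ (w v : Fin n → ℝ), A.mulVec w = 0 ∧ Matrix.vecMul v A = 0 ∧
      dotProduct v w = 1 ∧
      Filter.Tendsto (fun t : ℝ => NormedSpace.exp (t • A)) Filter.atTop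
        (nhds (Matrix.vecMulVec w v)) := by
  have hmult := hA.rootMultiplicity_charpoly
  obtain ⟨P, Q, hP, hAP, hPA, hQ⟩ :=
    Matrix.exists_isIdempotentElem_of_rootMultiplicity_charpoly_eq_one hmult
  have hP0 := Matrix.ne_zero_of_mul_add_eq_one
    (Matrix.zero_mem_spectrum_of_rootMultiplicity_charpoly_eq_one hmult) hQ
  obtain ⟨w, v, rfl⟩ := Matrix.exists_eq_vecMulVec_of_mul_eq_zero
    (Matrix.finrank_ker_toLin'_le_one_of_rootMultiplicity_charpoly_eq_one hmult) hAP
  have hvw := Matrix.dotProduct_eq_one_of_isIdempotentElem_vecMulVec hP hP0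
  refine ⟨w, v, ?_, ?_, hvw, ?_⟩
  · have hv : v ≠ 0 := by rintro rfl; simp at hvw
    simpa [Matrix.mul_vecMulVec, hv] using hAP
  · have hw : w ≠ 0 := by rintro rfl; simp at hvw
    simpa [Matrix.vecMulVec_mul, hw] using hPA
  set P := Matrix.vecMulVec w v
  let φ := (Complex.ofRealHom : ℝ →+* ℂ).mapMatrix (m := Fin n)
  have hspec : ∀ μ ∈ spectrum ℂ ((A - P).map Complex.ofReal), μ.re < 0 := by
    rw [show (A - P).map Complex.ofReal = φ A - φ P from map_sub φ A P]
    refine Matrix.re_neg_of_mem_spectrum_sub (hP.map φ) (Q := φ Q) ?_ ?_ hA.re_neg_of_mem_spectrum_s13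
    · rw [← map_mul, hPA, map_zero]
    · rw [← map_mul, ← map_add, hQ, map_one]
  have hlim := ((Matrix.tendsto_exp_smul_nhds_zero hspec).mul_const (1 - P)).add_const P
  rw [zero_mul, zero_add] at hlim
  exact hlim.congr fun t => (exp_smul_eq_exp_smul_sub_mul_add hAP hPA hP t).symm
end
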